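/- Given a time-stamping modulo M, tsm, that weakly satisfies a closed M weight-bounded linear weighted graph G, the map ts defined inductively by ts(1) = 0 and ts(i+1) = ts(i) + dtsm(i, i+1) is a monotone integer-valued realization of G. -/
import Mathlib


open Finset

/-- A weighted constraint edge: `ts tgt - ts src ◁ wt` where ◁ is `<` if `strict` else `≤`. -/
structure WEdge where
  src : ℕ
  strict : Bool
  wt : ℤ
  tgt : ℕ
deriving DecidableEq

/-- `ts` satisfies the constraint of edge `e`. -/
def satEdge (ts : ℕ → ℝ) (e : WEdge) : Prop :=
  if e.strict then ts e.tgt - ts e.src < (e.wt : ℝ) else ts e.tgt - ts e.src ≤ (e.wt : ℝ)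

/-- `ts` realizes the linear weighted graph on vertices `{1,…,n}` with edge set `E`:
monotone w.r.t. the linear order and all difference constraints hold. -/
def Realizes (n : ℕ) (E : Finset WEdge) (ts : ℕ → ℝ) : Prop :=
  (∀ u v : ℕ, 1 ≤ u → u ≤ v → v ≤ n → ts u ≤ ts v) ∧ ∀ e ∈ E, satEdge ts e

/-- Integer parts of consecutive time-stamps differ by at least 0 and at most `M - 1`. -/
def SlowlyMonotone (M : ℤ) (n : ℕ) (ts : ℕ → ℝ) : Prop :=
  ∀ i : ℕ, 1 ≤ i → i < n → 0 ≤ ⌊ts (i + 1)⌋ - ⌊ts i⌋ ∧ ⌊ts (i + 1)⌋ - ⌊ts i⌋ ≤ M - 1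

/-- All edges of the graph have endpoints in `{1,…,n}`. -/
def InGraph (n : ℕ) (E : Finset WEdge) : Prop :=
  ∀ e ∈ E, 1 ≤ e.src ∧ e.src ≤ n ∧ 1 ≤ e.tgt ∧ e.tgt ≤ n

/-- `M` weight-bounded: all weights have absolute value at most `M - 1`. -/
def WtBounded (M : ℤ) (E : Finset WEdge) : Prop := ∀ e ∈ E, |e.wt| ≤ M - 1

/-- `dtsm(u,v) = (tsm v - tsm u) mod M`. -/
def dtsm (M : ℤ) (tsm : ℕ → ℤ) (u v : ℕ) : ℤ := (tsm v - tsm u) % M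

/-- `dtsm⁺(u,v)`, for `u ≤ v`: the cumulative sum of consecutive `dtsm`'s, capped at `M`. -/
def dtsmP (M : ℤ) (tsm : ℕ → ℤ) (u v : ℕ) : ℤ :=
  min M (∑ i ∈ Finset.Ico u v, dtsm M tsm i (i + 1))

/-- Antisymmetric extension of `dtsm⁺` to arbitrary pairs. -/
def dtsmE (M : ℤ) (tsm : ℕ → ℤ) (u v : ℕ) : ℤ :=
  if u ≤ v then dtsmP M tsm u v else - dtsmP M tsm v u

/-- `(u,v)` is `tsm`-big. -/
def TsmBig (M : ℤ) (tsm : ℕ → ℤ) (u v : ℕ) : Prop :=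
  ∃ w1 w2 : ℕ, u ≤ w1 ∧ w1 < w2 ∧ w2 ≤ v ∧ M ≤ dtsm M tsm u w1 + dtsm M tsm w1 w2

/-- `tsm` is a time-stamping modulo `M` on vertices `{1,…,n}`. -/
def TSM (M : ℤ) (n : ℕ) (tsm : ℕ → ℤ) : Prop :=
  ∀ v, 1 ≤ v → v ≤ n → 0 ≤ tsm v ∧ tsm v < M

/-- `tsm` weakly satisfies the graph (forward/backward conditions). -/
def WeaklySat (M : ℤ) (E : Finset WEdge) (tsm : ℕ → ℤ) : Prop :=
  ∀ e ∈ E,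
    (e.src ≤ e.tgt → ¬ TsmBig M tsm e.src e.tgt ∧ dtsm M tsm e.src e.tgt ≤ e.wt) ∧
    (e.tgt < e.src → TsmBig M tsm e.tgt e.src ∨ - e.wt ≤ dtsm M tsm e.tgt e.src)

/-- `(u,v) ∈ geqFr`: fractional part of `ts u` must be ≥ that of `ts v`. -/
def geqFr (M : ℤ) (tsm : ℕ → ℤ) (E : Finset WEdge) (u v : ℕ) : Prop :=
  (∃ e ∈ E, e.src = u ∧ e.tgt = v ∧ dtsmE M tsm u v = e.wt) ∨
  (v + 1 = u ∧ dtsmE M tsm u v = 0)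

/-- `(u,v) ∈ gtFr`: fractional part of `ts u` must be > that of `ts v`. -/
def gtFr (M : ℤ) (tsm : ℕ → ℤ) (E : Finset WEdge) (u v : ℕ) : Prop :=
  ∃ e ∈ E, e.strict = true ∧ e.src = u ∧ e.tgt = v ∧ dtsmE M tsm u v = e.wt

open Classical in
/-- Number of `gtFr` edges used by the path `p 0, p 1, …, p k`. -/
noncomputable def gtCount (M : ℤ) (tsm : ℕ → ℤ) (E : Finset WEdge) (k : ℕ) (p : ℕ → ℕ) : ℕ :=
  ((Finset.range k).filter (fun i => gtFr M tsm E (p i) (p (i + 1)))).card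

/-- The inductively defined map `ts 1 = 0`, `ts (i+1) = ts i + dtsm i (i+1)`,
written in closed form as a cumulative sum. -/
theorem cumulative_map_realizes_closed (M : ℤ) (hM : 1 ≤ M) (n : ℕ) (E : Finset WEdge)
    (hG : InGraph n E) (hW : WtBounded M E) (hclosed : ∀ e ∈ E, e.strict = false)
    (tsm : ℕ → ℤ) (hT : TSM M n tsm)
    (hWS : ∀ e ∈ E, dtsmE M tsm e.src e.tgt ≤ e.wt) :
    Realizes n E (fun v => ((∑ i ∈ Finset.Ico 1 v, dtsm M tsm i (i + 1) : ℤ) : ℝ)) := by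
  have hMpos : (0:ℤ) < M := hM
  have hnonneg : ∀ i : ℕ, 0 ≤ dtsm M tsm i (i + 1) := fun i =>
    Int.emod_nonneg _ (ne_of_gt hMpos)
  have hmono : ∀ u v : ℕ, u ≤ v →
      (∑ i ∈ Finset.Ico 1 u, dtsm M tsm i (i + 1)) ≤
        ∑ i ∈ Finset.Ico 1 v, dtsm M tsm i (i + 1) := by
    intro u v huv
    apply Finset.sum_le_sum_of_subset_of_nonneg
    · exact Finset.Ico_subset_Ico le_rfl huv
    · intro i _ _; exact hnonneg i
  have hsplit : ∀ u v : ℕ, 1 ≤ u → u ≤ v →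
      (∑ i ∈ Finset.Ico 1 v, dtsm M tsm i (i + 1)) -
        (∑ i ∈ Finset.Ico 1 u, dtsm M tsm i (i + 1)) =
        ∑ i ∈ Finset.Ico u v, dtsm M tsm i (i + 1) := by
    intro u v h1 h2
    rw [← Finset.sum_Ico_consecutive _ h1 h2]
    ring
  constructor
  · intro u v _ huv _
    simp only []
    exact_mod_cast hmono u v huv
  · intro e he
    have hc := hclosed e he
    have hG' := hG e he
    unfold satEdge
    rw [hc]
    simp only [if_false, Bool.false_eq_true]
    have hws := hWS e he
    have hw := hW e he
    unfold dtsmE at hws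
    by_cases h : e.src ≤ e.tgt
    · rw [if_pos h] at hws
      unfold dtsmP at hws
      have hS : (∑ i ∈ Finset.Ico e.src e.tgt, dtsm M tsm i (i + 1)) ≤ e.wt := by
        rcases min_cases M (∑ i ∈ Finset.Ico e.src e.tgt, dtsm M tsm i (i + 1)) with
          ⟨hm, hle⟩ | ⟨hm, _⟩
        · exfalso
          rw [hm] at hws
          have := (abs_le.mp hw).2
          omega
        · rwa [hm] at hws
      have := hsplit e.src e.tgt hG'.1 h
      have goal : (∑ i ∈ Finset.Ico 1 e.tgt, dtsm M tsm i (i + 1)) -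
          (∑ i ∈ Finset.Ico 1 e.src, dtsm M tsm i (i + 1)) ≤ e.wt := by
        rw [this]; exact hS
      exact_mod_cast goal
    · push_neg at h
      rw [if_neg (not_le.mpr h)] at hws
      unfold dtsmP at hws
      have hS : - e.wt ≤ ∑ i ∈ Finset.Ico e.tgt e.src, dtsm M tsm i (i + 1) := by
        have := min_le_right M (∑ i ∈ Finset.Ico e.tgt e.src, dtsm M tsm i (i + 1))
        omega
      have hsp := hsplit e.tgt e.src hG'.2.2.1 h.le
      have goal : (∑ i ∈ Finset.Ico 1 e.tgt, dtsm M tsm i (i + 1)) -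
          (∑ i ∈ Finset.Ico 1 e.src, dtsm M tsm i (i + 1)) ≤ e.wt := by
        omega
      exact_mod_cast goal
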